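/- arXiv:math/0602397 — 4 statements merged into one kernel-verified Lean document; each statement's English description precedes it below -/
import Mathlib

section
/- There is a unique real number u₀ such that the solution V₀ of (σ²/2)V₀'' + μV₀' − ρV₀ = 0 on ℝ with initial conditions V₀(u₀) = μ/ρ and V₀'(u₀) = 1 satisfies V₀(0) = 0; this u₀ is given by u₀ = (1/(r₁+r₂))·ln[(ρ+μr₂)/(ρ−μr₁)], where r₁ = (−μ+√(μ²+2σ²ρ))/σ² and r₂ = (μ+√(μ²+2σ²ρ))/σ², and it satisfies 0 < u₀ < μ/ρ. -/
open Real MeasureTheory Filter Set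

section AuxLemmas

lemma hasDerivAt_cexp (c a x : ℝ) :
    HasDerivAt (fun y => c * Real.exp (a * y)) (c * a * Real.exp (a * x)) x := by
  have h : HasDerivAt (fun y : ℝ => a * y) a x := by
    simpa using (hasDerivAt_id x).const_mul a
  have := ((Real.hasDerivAt_exp (a * x)).comp x h).const_mul c
  refine this.congr_deriv (Eq.symm ?_)
  ring

lemma hasDerivAt_comb (c a d b x : ℝ) :
    HasDerivAt (fun y => c * Real.exp (a * y) + d * Real.exp (b * y))
      (c * a * Real.exp (a * x) + d * b * Real.exp (b * x)) x :=
  (hasDerivAt_cexp c a x).add (hasDerivAt_cexp d b x)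

lemma deriv_comb (c a d b : ℝ) :
    deriv (fun y => c * Real.exp (a * y) + d * Real.exp (b * y)) =
      fun x => c * a * Real.exp (a * x) + d * b * Real.exp (b * x) :=
  funext fun x => (hasDerivAt_comb c a d b x).deriv

lemma ode_rep {a b : ℝ} (hab : b ≠ a) {V : ℝ → ℝ} (hV : ContDiff ℝ 2 V)
    (hODE : ∀ x, deriv (deriv V) x = (a + b) * deriv V x - a * b * V x) :
    ∃ c d : ℝ, ∀ x, V x = c * Real.exp (a * x) + d * Real.exp (b * x) := by
  have h2 := contDiff_succ_iff_deriv.mp (show ContDiff ℝ (1 + 1) V by norm_num; exact hV)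
  have hV1 : Differentiable ℝ V := h2.1
  have hV2 : Differentiable ℝ (deriv V) := h2.2.2.differentiable one_ne_zero
  set g : ℝ → ℝ := fun x => Real.exp (-b * x) * (deriv V x - a * V x) with hg
  have hgd : ∀ x, HasDerivAt g 0 x := by
    intro x
    have h1 : HasDerivAt (fun y => Real.exp (-b * y)) ((-b) * Real.exp (-b * x)) x := by
      simpa using hasDerivAt_cexp 1 (-b) x
    have h2 : HasDerivAt (fun y => deriv V y - a * V y)
        (deriv (deriv V) x - a * deriv V x) x :=
      ((hV2 x).hasDerivAt).sub (((hV1 x).hasDerivAt).const_mul a)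
    have h3 := h1.mul h2
    refine h3.congr_deriv (Eq.symm ?_)
    rw [hODE x]; ring
  have hgc : ∀ x, g x = g 0 := fun x =>
    is_const_of_deriv_eq_zero (fun y => (hgd y).differentiableAt) (fun y => (hgd y).deriv) x 0
  set C := g 0 with hC
  have key : ∀ x, deriv V x - a * V x = C * Real.exp (b * x) := by
    intro x
    have h1 : Real.exp (b * x) * Real.exp (-b * x) = 1 := by
      rw [← Real.exp_add]; norm_num
    have h2 := hgc x
    simp only [hg] at h2
    calc deriv V x - a * V x = (Real.exp (b*x) * Real.exp (-b*x)) * (deriv V x - a * V x) := by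
          rw [h1, one_mul]
      _ = Real.exp (b*x) * (Real.exp (-b*x) * (deriv V x - a * V x)) := by ring
      _ = Real.exp (b*x) * C := by rw [h2]
      _ = C * Real.exp (b*x) := mul_comm _ _
  have hba : b - a ≠ 0 := sub_ne_zero.mpr hab
  set H : ℝ → ℝ := fun x => Real.exp (-a * x) * V x - (C / (b - a)) * Real.exp ((b - a) * x)
    with hHdef
  have hHd : ∀ x, HasDerivAt H 0 x := by
    intro x
    have h1 : HasDerivAt (fun y => Real.exp (-a * y)) ((-a) * Real.exp (-a * x)) x := by
      simpa using hasDerivAt_cexp 1 (-a) x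
    have h3 := (h1.mul ((hV1 x).hasDerivAt)).sub (hasDerivAt_cexp (C/(b-a)) (b-a) x)
    refine h3.congr_deriv (Eq.symm ?_)
    have hE : Real.exp (-a * x) * Real.exp (b * x) = Real.exp ((b - a) * x) := by
      rw [← Real.exp_add]; ring_nf
    have hk := key x
    have : Real.exp (-a*x) * deriv V x - a * Real.exp (-a*x) * V x
        = C * Real.exp ((b-a)*x) := by
      rw [← hE]
      calc Real.exp (-a*x) * deriv V x - a * Real.exp (-a*x) * V x
          = Real.exp (-a*x) * (deriv V x - a * V x) := by ring
        _ = Real.exp (-a*x) * (C * Real.exp (b*x)) := by rw [hk]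
        _ = C * (Real.exp (-a*x) * Real.exp (b*x)) := by ring
    rw [div_mul_cancel₀ C hba]
    linear_combination -this
  have hHc : ∀ x, H x = H 0 := fun x =>
    is_const_of_deriv_eq_zero (fun y => (hHd y).differentiableAt) (fun y => (hHd y).deriv) x 0
  refine ⟨H 0, C / (b - a), fun x => ?_⟩
  have h2 := hHc x
  simp only [hHdef] at h2
  have h1 : Real.exp (a * x) * Real.exp (-a * x) = 1 := by
    rw [← Real.exp_add]; norm_num
  have hE : Real.exp (a * x) * Real.exp ((b - a) * x) = Real.exp (b * x) := by
    rw [← Real.exp_add]; ring_nf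
  calc V x = (Real.exp (a*x) * Real.exp (-a*x)) * V x := by rw [h1, one_mul]
    _ = Real.exp (a*x) * (Real.exp (-a*x) * V x - (C/(b-a)) * Real.exp ((b-a)*x))
        + (C/(b-a)) * (Real.exp (a*x) * Real.exp ((b-a)*x)) := by ring
    _ = H 0 * Real.exp (a*x) + C/(b-a) * Real.exp (b*x) := by rw [h2, hE]; ring

end AuxLemmas


noncomputable section

variable (μ σ ρ : ℝ)

/-- The characteristic root `r₁`. -/
def r1 : ℝ := (-μ + Real.sqrt (μ ^ 2 + 2 * σ ^ 2 * ρ)) / σ ^ 2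

/-- The characteristic root `r₂`. -/
def r2 : ℝ := (μ + Real.sqrt (μ ^ 2 + 2 * σ ^ 2 * ρ)) / σ ^ 2

/-- The Milne–Robertson threshold `u₀`. -/
def u0 : ℝ :=
  (1 / (r1 μ σ ρ + r2 μ σ ρ)) * Real.log ((ρ + μ * r2 μ σ ρ) / (ρ - μ * r1 μ σ ρ))

/-- `(A - ρ)V` where `A = (σ²/2) d²/dx² + μ d/dx`. -/
def AV (V : ℝ → ℝ) (x : ℝ) : ℝ :=
  σ ^ 2 / 2 * deriv (deriv V) x + μ * deriv V x - ρ * V x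

/-- `V₀` is the solution on `ℝ` of `(A-ρ)V₀ = 0` with `V₀(u₀) = μ/ρ`, `V₀'(u₀) = 1`. -/
def IsV0 (V : ℝ → ℝ) : Prop :=
  ContDiff ℝ 2 V ∧ (∀ x, AV μ σ ρ V x = 0) ∧
    V (u0 μ σ ρ) = μ / ρ ∧ deriv V (u0 μ σ ρ) = 1

/-- The Dirichlet Green's function for the diffusion. -/
def G (x y t : ℝ) : ℝ :=
  (Real.sqrt (2 * Real.pi * σ ^ 2 * t))⁻¹ *
    (Real.exp (-(x - y + μ * t) ^ 2 / (2 * σ ^ 2 * t)) -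
      Real.exp (-(2 * μ * x / σ ^ 2) - (x + y - μ * t) ^ 2 / (2 * σ ^ 2 * t)))

/-- `p(x,t)`, the probability that the diffusion started at `x` hits `0` before time `t`. -/
def pf (x t : ℝ) : ℝ := 1 - ∫ y in Set.Ioi (0 : ℝ), G μ σ x y t

/-- `h(x,t) = x + μt - μ∫₀ᵗ p(x,s) ds`. -/
def hf (x t : ℝ) : ℝ := x + μ * t - μ * ∫ s in (0 : ℝ)..t, pf μ σ x s

/-- `β(t) = [∂h/∂x(0,t) − e^{ρt}·V₀'(0)] / (∂p/∂x(0,t))`. -/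
def betaF (V₀ : ℝ → ℝ) (t : ℝ) : ℝ :=
  (deriv (fun x => hf μ σ x t) 0 - Real.exp (ρ * t) * deriv V₀ 0) /
    deriv (fun x => pf μ σ x t) 0

open Classical in
/-- `u₂(β,t)`. -/
def u2F (V₀ : ℝ → ℝ) (β t : ℝ) : ℝ :=
  if β ≤ betaF μ σ ρ V₀ t then u0 μ σ ρ
  else sSup {z : ℝ | ∀ x ≥ (0:ℝ),
    β * (1 - pf μ σ x t) + hf μ σ x t ≤ Real.exp (ρ * t) * V₀ (x - z + u0 μ σ ρ)}

/-- `u₁(β,t)`: for `β > β(t)` this is the unique point where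
`β(1 − p(x,t)) + h(x,t) = e^{ρt}·V₀(x − u₂(β,t) + u₀)`. -/
def u1F (V₀ : ℝ → ℝ) (β t : ℝ) : ℝ :=
  sSup {x : ℝ | 0 < x ∧
    β * (1 - pf μ σ x t) + hf μ σ x t =
      Real.exp (ρ * t) * V₀ (x - u2F μ σ ρ V₀ β t + u0 μ σ ρ)}


/-- there is a unique `u₀` such that the solution `V₀` of
`(σ²/2)V₀'' + μV₀' − ρV₀ = 0` with `V₀(u₀) = μ/ρ`, `V₀'(u₀) = 1` satisfies `V₀(0) = 0`;
it is given by the explicit formula `u0 μ σ ρ` and satisfies `0 < u₀ < μ/ρ`. -/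
theorem stmt0 (hμ : 0 < μ) (hσ : 0 < σ) (hρ : 0 < ρ) :
    (∀ u : ℝ,
      (∃ V : ℝ → ℝ, ContDiff ℝ 2 V ∧
        (∀ x, σ ^ 2 / 2 * deriv (deriv V) x + μ * deriv V x - ρ * V x = 0) ∧
        V u = μ / ρ ∧ deriv V u = 1 ∧ V 0 = 0) ↔ u = u0 μ σ ρ) ∧
    0 < u0 μ σ ρ ∧ u0 μ σ ρ < μ / ρ := by
  have hσ0 : σ ≠ 0 := ne_of_gt hσ
  have hρ0 : ρ ≠ 0 := ne_of_gt hρ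
  have hσ2 : (0:ℝ) < σ ^ 2 := by positivity
  set D := Real.sqrt (μ ^ 2 + 2 * σ ^ 2 * ρ) with hD
  have hD2 : D ^ 2 = μ ^ 2 + 2 * σ ^ 2 * ρ := Real.sq_sqrt (by positivity)
  have hD0 : 0 ≤ D := Real.sqrt_nonneg _
  have hDμ : μ < D := by nlinarith [mul_pos hσ2 hρ]
  have hr1 : r1 μ σ ρ = (D - μ) / σ ^ 2 := by simp only [r1]; rw [← hD]; ring
  have hr2 : r2 μ σ ρ = (μ + D) / σ ^ 2 := by simp only [r2]; rfl
  have hApos : 0 < r1 μ σ ρ := by rw [hr1]; exact div_pos (by linarith) hσ2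
  have hBpos : 0 < r2 μ σ ρ := by rw [hr2]; exact div_pos (by linarith) hσ2
  have hspos : 0 < r1 μ σ ρ + r2 μ σ ρ := by linarith
  have hs0 : r1 μ σ ρ + r2 μ σ ρ ≠ 0 := ne_of_gt hspos
  have hq1 : ρ - μ * r1 μ σ ρ = (D - μ) ^ 2 / (2 * σ ^ 2) := by
    rw [hr1]; field_simp; linear_combination (-1) * hD2
  have hq2 : ρ + μ * r2 μ σ ρ = (D + μ) ^ 2 / (2 * σ ^ 2) := by
    rw [hr2]; field_simp; linear_combination (-1) * hD2
  have hpos1 : 0 < ρ - μ * r1 μ σ ρ := by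
    rw [hq1]; exact div_pos (pow_pos (by linarith) 2) (by positivity)
  have hpos2 : 0 < ρ + μ * r2 μ σ ρ := by
    have := mul_pos hμ hBpos; linarith
  have hRpos : 0 < (ρ + μ * r2 μ σ ρ) / (ρ - μ * r1 μ σ ρ) := div_pos hpos2 hpos1
  have hR1 : 1 < (ρ + μ * r2 μ σ ρ) / (ρ - μ * r1 μ σ ρ) := by
    rw [lt_div_iff₀ hpos1]
    have := mul_pos hμ hApos
    have := mul_pos hμ hBpos
    linarith
  have hu0eq : Real.exp ((r1 μ σ ρ + r2 μ σ ρ) * u0 μ σ ρ)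
      = (ρ + μ * r2 μ σ ρ) / (ρ - μ * r1 μ σ ρ) := by
    have : (r1 μ σ ρ + r2 μ σ ρ) * u0 μ σ ρ
        = Real.log ((ρ + μ * r2 μ σ ρ) / (ρ - μ * r1 μ σ ρ)) := by
      simp only [u0]; field_simp
    rw [this, Real.exp_log hRpos]
  have char1 : σ ^ 2 / 2 * (r1 μ σ ρ) ^ 2 + μ * r1 μ σ ρ - ρ = 0 := by
    rw [hr1]; field_simp; linear_combination hD2
  have char2 : σ ^ 2 / 2 * (r2 μ σ ρ) ^ 2 - μ * r2 μ σ ρ - ρ = 0 := by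
    rw [hr2]; field_simp; linear_combination hD2
  refine ⟨fun u => ⟨?_, ?_⟩, ?_, ?_⟩
  · -- forward
    rintro ⟨V, hVc, hVode, hVu, hVu', hV0⟩
    have e1 : r1 μ σ ρ + -(r2 μ σ ρ) = -(2*μ)/σ^2 := by rw [hr1, hr2]; ring
    have e2 : r1 μ σ ρ * -(r2 μ σ ρ) = -(2*ρ)/σ^2 := by
      rw [hr1, hr2]; field_simp; linear_combination (-1) * hD2
    have hODE' : ∀ x, deriv (deriv V) x
        = (r1 μ σ ρ + -(r2 μ σ ρ)) * deriv V x - (r1 μ σ ρ * -(r2 μ σ ρ)) * V x := by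
      intro x
      rw [e1, e2]
      have h := hVode x
      field_simp
      linear_combination 2 * h
    obtain ⟨c, d, hrep⟩ := ode_rep (by linarith : -(r2 μ σ ρ) ≠ r1 μ σ ρ) hVc hODE'
    have hVfun : V = fun x => c * Real.exp (r1 μ σ ρ * x) + d * Real.exp (-(r2 μ σ ρ) * x) :=
      funext hrep
    have hdV : deriv V = fun x => c * r1 μ σ ρ * Real.exp (r1 μ σ ρ * x)
        + d * -(r2 μ σ ρ) * Real.exp (-(r2 μ σ ρ) * x) := by
      rw [hVfun, deriv_comb]
    have h0 : c + d = 0 := by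
      have h := hrep 0
      rw [hV0] at h
      simpa using h.symm
    have he1 : c * Real.exp (r1 μ σ ρ * u) + d * Real.exp (-(r2 μ σ ρ) * u) = μ / ρ := by
      have h := hrep u; rw [hVu] at h; exact h.symm
    have he2 : c * r1 μ σ ρ * Real.exp (r1 μ σ ρ * u)
        + d * -(r2 μ σ ρ) * Real.exp (-(r2 μ σ ρ) * u) = 1 := by
      have h := congrFun hdV u; rw [hVu'] at h; exact h.symm
    have hcne : c ≠ 0 := by
      intro hc
      have hd : d = 0 := by linarith
      rw [hc, hd] at he2; simp at he2
    have hdd : d = -c := by linarith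
    subst hdd
    have hkey : (ρ - μ * r1 μ σ ρ) * Real.exp (r1 μ σ ρ * u)
        = (ρ + μ * r2 μ σ ρ) * Real.exp (-(r2 μ σ ρ) * u) := by
      have he1' : ρ * (c * Real.exp (r1 μ σ ρ * u) + -c * Real.exp (-(r2 μ σ ρ) * u)) = μ := by
        rw [he1]; field_simp
      have hz : c * ((ρ - μ * r1 μ σ ρ) * Real.exp (r1 μ σ ρ * u)
          - (ρ + μ * r2 μ σ ρ) * Real.exp (-(r2 μ σ ρ) * u)) = 0 := by
        linear_combination he1' - μ * he2
      rcases mul_eq_zero.mp hz with h | h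
      · exact absurd h hcne
      · linarith
    have hmul : Real.exp (r1 μ σ ρ * u) * Real.exp (r2 μ σ ρ * u)
        = Real.exp ((r1 μ σ ρ + r2 μ σ ρ) * u) := by
      rw [← Real.exp_add]; ring_nf
    have hmul2 : Real.exp (-(r2 μ σ ρ) * u) * Real.exp (r2 μ σ ρ * u) = 1 := by
      rw [← Real.exp_add]; norm_num
    have hfin : (ρ - μ * r1 μ σ ρ) * Real.exp ((r1 μ σ ρ + r2 μ σ ρ) * u)
        = ρ + μ * r2 μ σ ρ := by
      linear_combination Real.exp (r2 μ σ ρ * u) * hkey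
        - (ρ - μ * r1 μ σ ρ) * hmul + (ρ + μ * r2 μ σ ρ) * hmul2
    have hEE : Real.exp ((r1 μ σ ρ + r2 μ σ ρ) * u)
        = (ρ + μ * r2 μ σ ρ) / (ρ - μ * r1 μ σ ρ) := by
      rw [eq_div_iff (ne_of_gt hpos1)]; linear_combination hfin
    have hlog := congrArg Real.log hEE
    rw [Real.log_exp] at hlog
    simp only [u0]
    field_simp
    rw [mul_comm μ (r2 μ σ ρ), mul_comm μ (r1 μ σ ρ)] at hlog
    linear_combination hlog
  · -- backward
    rintro rfl
    set s := r1 μ σ ρ + r2 μ σ ρ with hsdef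
    set c0 := (ρ + μ * r2 μ σ ρ) / (ρ * s) * Real.exp (-(r1 μ σ ρ) * u0 μ σ ρ) with hc0
    set d0 := -((ρ - μ * r1 μ σ ρ) / (ρ * s) * Real.exp (r2 μ σ ρ * u0 μ σ ρ)) with hd0
    have m1 : Real.exp (-(r1 μ σ ρ) * u0 μ σ ρ) * Real.exp (r1 μ σ ρ * u0 μ σ ρ) = 1 := by
      rw [← Real.exp_add]; norm_num
    have m2 : Real.exp (r2 μ σ ρ * u0 μ σ ρ) * Real.exp (-(r2 μ σ ρ) * u0 μ σ ρ) = 1 := by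
      rw [← Real.exp_add]; norm_num
    have hfin0 : (ρ - μ * r1 μ σ ρ) * Real.exp (s * u0 μ σ ρ) = ρ + μ * r2 μ σ ρ := by
      rw [hsdef, hu0eq]; field_simp
    have mm : Real.exp (r1 μ σ ρ * u0 μ σ ρ) * Real.exp (r2 μ σ ρ * u0 μ σ ρ)
        = Real.exp (s * u0 μ σ ρ) := by
      rw [hsdef, ← Real.exp_add]; ring_nf
    have hkey0 : (ρ + μ * r2 μ σ ρ) * Real.exp (-(r1 μ σ ρ) * u0 μ σ ρ)
        = (ρ - μ * r1 μ σ ρ) * Real.exp (r2 μ σ ρ * u0 μ σ ρ) := by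
      linear_combination (-(Real.exp (-(r1 μ σ ρ) * u0 μ σ ρ))) * hfin0
        + ((ρ - μ * r1 μ σ ρ) * Real.exp (r2 μ σ ρ * u0 μ σ ρ)) * m1
        - ((ρ - μ * r1 μ σ ρ) * Real.exp (-(r1 μ σ ρ) * u0 μ σ ρ)) * mm
    refine ⟨fun x => c0 * Real.exp (r1 μ σ ρ * x) + d0 * Real.exp (-(r2 μ σ ρ) * x),
      ?_, ?_, ?_, ?_, ?_⟩
    · have hone : ∀ (c a : ℝ), ContDiff ℝ 2 (fun x : ℝ => c * Real.exp (a * x)) := by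
        intro c a
        exact contDiff_const.mul (Real.contDiff_exp.comp (contDiff_const.mul contDiff_id))
      exact (hone c0 _).add (hone d0 _)
    · intro x
      rw [deriv_comb, deriv_comb]
      linear_combination (c0 * Real.exp (r1 μ σ ρ * x)) * char1
        + (d0 * Real.exp (-(r2 μ σ ρ) * x)) * char2
    · rw [hc0, hd0]
      calc (ρ + μ * r2 μ σ ρ) / (ρ * s) * Real.exp (-(r1 μ σ ρ) * u0 μ σ ρ)
            * Real.exp (r1 μ σ ρ * u0 μ σ ρ)
          + -((ρ - μ * r1 μ σ ρ) / (ρ * s) * Real.exp (r2 μ σ ρ * u0 μ σ ρ))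
            * Real.exp (-(r2 μ σ ρ) * u0 μ σ ρ)
          = (ρ + μ * r2 μ σ ρ) / (ρ * s) - (ρ - μ * r1 μ σ ρ) / (ρ * s) := by
            linear_combination ((ρ + μ * r2 μ σ ρ) / (ρ * s)) * m1
              - ((ρ - μ * r1 μ σ ρ) / (ρ * s)) * m2
        _ = μ / ρ := by rw [hsdef]; field_simp; ring
    · rw [deriv_comb, hc0, hd0]
      calc (ρ + μ * r2 μ σ ρ) / (ρ * s) * Real.exp (-(r1 μ σ ρ) * u0 μ σ ρ) * r1 μ σ ρ
            * Real.exp (r1 μ σ ρ * u0 μ σ ρ)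
          + -((ρ - μ * r1 μ σ ρ) / (ρ * s) * Real.exp (r2 μ σ ρ * u0 μ σ ρ)) * -(r2 μ σ ρ)
            * Real.exp (-(r2 μ σ ρ) * u0 μ σ ρ)
          = (ρ + μ * r2 μ σ ρ) / (ρ * s) * r1 μ σ ρ
            + (ρ - μ * r1 μ σ ρ) / (ρ * s) * r2 μ σ ρ := by
            linear_combination ((ρ + μ * r2 μ σ ρ) / (ρ * s) * r1 μ σ ρ) * m1
              + ((ρ - μ * r1 μ σ ρ) / (ρ * s) * r2 μ σ ρ) * m2
        _ = 1 := by rw [hsdef]; field_simp; ring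
    · simp only [mul_zero, Real.exp_zero, mul_one, hc0, hd0]
      linear_combination (1 / (ρ * s)) * hkey0
  · -- 0 < u0
    simp only [u0]
    exact mul_pos (one_div_pos.mpr hspos) (Real.log_pos hR1)
  · -- u0 < μ/ρ
    have hxpos : 0 < (D + μ) / (D - μ) := div_pos (by linarith) (by linarith)
    have hx1 : 1 < (D + μ) / (D - μ) := (one_lt_div (by linarith)).mpr (by linarith)
    have hRx : (ρ + μ * r2 μ σ ρ) / (ρ - μ * r1 μ σ ρ) = ((D + μ) / (D - μ)) ^ 2 := by
      have hne1 : D - μ ≠ 0 := by linarith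
      rw [hq1, hq2, div_pow]
      field_simp
    have ht0 : 0 < Real.log ((D + μ) / (D - μ)) := Real.log_pos hx1
    have hsinh : Real.log ((D + μ) / (D - μ)) < Real.sinh (Real.log ((D + μ) / (D - μ))) :=
      Real.self_lt_sinh_iff.mpr ht0
    have hsv : Real.sinh (Real.log ((D + μ) / (D - μ))) = D * μ / (σ ^ 2 * ρ) := by
      rw [Real.sinh_eq, Real.exp_neg, Real.exp_log hxpos]
      have hne1 : D - μ ≠ 0 := by linarith
      have hne2 : D + μ ≠ 0 := by linarith
      field_simp
      linear_combination (-(2*D*μ)) * hD2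
    have hlogR : Real.log ((ρ + μ * r2 μ σ ρ) / (ρ - μ * r1 μ σ ρ))
        = 2 * Real.log ((D + μ) / (D - μ)) := by
      rw [hRx, Real.log_pow]; push_cast; ring
    simp only [u0]
    rw [hlogR]
    have hfin : 1 / (r1 μ σ ρ + r2 μ σ ρ) * (2 * (D * μ / (σ ^ 2 * ρ))) = μ / ρ := by
      have hD0' : D ≠ 0 := by positivity
      have hsum2 : (D - μ) / σ ^ 2 + (μ + D) / σ ^ 2 = 2 * D / σ ^ 2 := by ring
      rw [hr1, hr2, hsum2, one_div_div]
      field_simp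
    calc 1 / (r1 μ σ ρ + r2 μ σ ρ) * (2 * Real.log ((D + μ) / (D - μ)))
        < 1 / (r1 μ σ ρ + r2 μ σ ρ) * (2 * (D * μ / (σ ^ 2 * ρ))) := by
          apply mul_lt_mul_of_pos_left _ (one_div_pos.mpr hspos)
          rw [← hsv]; linarith
      _ = μ / ρ := hfin


end
end

section
/- The function V₀ is concave on (−∞, u₀] and convex on [u₀, ∞), and V₀''(u₀) = 0. -/
open Real MeasureTheory Filter Set

noncomputable section

variable (μ σ ρ : ℝ)

lemma hasDerivAt_expAux (a b r q u x : ℝ) :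
    HasDerivAt (fun y => a * Real.exp (r * (y - u)) + b * Real.exp (-q * (y - u)))
      (a * r * Real.exp (r * (x - u)) + b * -q * Real.exp (-q * (x - u))) x := by
  have h1 : HasDerivAt (fun y : ℝ => r * (y - u)) (r * 1) x :=
    ((hasDerivAt_id x).sub_const u).const_mul r
  have h2 : HasDerivAt (fun y : ℝ => -q * (y - u)) (-q * 1) x :=
    ((hasDerivAt_id x).sub_const u).const_mul (-q)
  have := (h1.exp.const_mul a).fun_add (h2.exp.const_mul b)
  exact this.congr_deriv (by ring)

lemma zero_of_deriv_eq (c t₀ : ℝ) {g : ℝ → ℝ} (hg : Differentiable ℝ g)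
    (hd : ∀ x, deriv g x = c * g x) (h0 : g t₀ = 0) : ∀ x, g x = 0 := by
  have key : ∀ x, deriv (fun y => g y * Real.exp (-c * y)) x = 0 := by
    intro x
    have h1 : HasDerivAt g (c * g x) x := by
      have := (hg x).hasDerivAt; rwa [hd x] at this
    have h2 : HasDerivAt (fun y : ℝ => Real.exp (-c * y)) (Real.exp (-c * x) * (-c * 1)) x :=
      ((hasDerivAt_id' x).const_mul (-c)).exp
    have h3 := (h1.fun_mul h2).deriv
    rw [h3]; ring
  have hdiff : Differentiable ℝ (fun y => g y * Real.exp (-c * y)) :=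
    hg.mul (Real.differentiable_exp.comp (differentiable_id.const_mul (-c)))
  intro x
  have h4 := is_const_of_deriv_eq_zero hdiff key x t₀
  rw [h0, zero_mul] at h4
  exact (mul_eq_zero.mp h4).resolve_right (Real.exp_ne_zero _)


set_option maxHeartbeats 1000000 in
/-- `V₀` is concave on `(−∞, u₀]`, convex on `[u₀, ∞)`, and `V₀''(u₀) = 0`. -/
theorem stmt1 (hμ : 0 < μ) (hσ : 0 < σ) (hρ : 0 < ρ)
    (V₀ : ℝ → ℝ) (hV₀ : IsV0 μ σ ρ V₀) (hV₀0 : V₀ 0 = 0) :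
    ConcaveOn ℝ (Set.Iic (u0 μ σ ρ)) V₀ ∧
    ConvexOn ℝ (Set.Ici (u0 μ σ ρ)) V₀ ∧
    deriv (deriv V₀) (u0 μ σ ρ) = 0 := by
  obtain ⟨hC, hODE, hVu, hV'u⟩ := hV₀
  set u := u0 μ σ ρ with hu
  have hσ2 : (0:ℝ) < σ ^ 2 := by positivity
  set s := Real.sqrt (μ ^ 2 + 2 * σ ^ 2 * ρ) with hsdef
  have hs2 : s ^ 2 = μ ^ 2 + 2 * σ ^ 2 * ρ := Real.sq_sqrt (by positivity)
  have hsnn : 0 ≤ s := Real.sqrt_nonneg _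
  have hμs : μ < s := by nlinarith
  set R1 := r1 μ σ ρ with hR1def
  set R2 := r2 μ σ ρ with hR2def
  have hR1 : R1 = (-μ + s) / σ ^ 2 := rfl
  have hR2 : R2 = (μ + s) / σ ^ 2 := rfl
  have hR1pos : 0 < R1 := by rw [hR1]; exact div_pos (by linarith) hσ2
  have hR2pos : 0 < R2 := by rw [hR2]; exact div_pos (by linarith) hσ2
  have hRsum : 0 < R1 + R2 := by linarith
  have hsub : (R2 - R1) * σ ^ 2 = 2 * μ := by rw [hR1, hR2]; field_simp; ring
  have hmul : R1 * R2 * σ ^ 2 = 2 * ρ := by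
    rw [hR1, hR2]; field_simp; linear_combination hs2
  -- second derivative of V₀ from the ODE
  have hVdiff : Differentiable ℝ V₀ := hC.differentiable (by norm_num)
  have hV'diff : Differentiable ℝ (deriv V₀) := by
    have h2 : ContDiff ℝ ((1 : ℕ) + 1) V₀ := by exact_mod_cast hC
    exact ((contDiff_succ_iff_deriv.mp h2).2.2).differentiable (by norm_num)
  have hW : ∀ x, deriv (deriv V₀) x = (R1 - R2) * deriv V₀ x + R1 * R2 * V₀ x := by
    intro x
    have h := hODE x
    rw [AV] at h
    have hWx : deriv (deriv V₀) x * σ ^ 2 =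
        ((R1 - R2) * deriv V₀ x + R1 * R2 * V₀ x) * σ ^ 2 := by
      linear_combination 2 * h + deriv V₀ x * hsub - V₀ x * hmul
    exact mul_right_cancel₀ (ne_of_gt hσ2) hWx
  have key1 : (R2 - R1) * ρ = μ * (R1 * R2) := by
    have : (R2 - R1) * ρ * σ ^ 2 = μ * (R1 * R2) * σ ^ 2 := by
      linear_combination ρ * hsub - μ * hmul
    exact mul_right_cancel₀ (ne_of_gt hσ2) this
  have hWu : deriv (deriv V₀) u = 0 := by
    rw [hW u, hV'u, hVu]
    field_simp
    linear_combination -key1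
  -- the explicit solution F
  set a := R2 / (R1 * (R1 + R2)) with ha
  set b := -R1 / (R2 * (R1 + R2)) with hb
  set F : ℝ → ℝ := fun y => a * Real.exp (R1 * (y - u)) + b * Real.exp (-R2 * (y - u))
    with hF
  have hFd : ∀ x, HasDerivAt F
      (a * R1 * Real.exp (R1 * (x - u)) + b * -R2 * Real.exp (-R2 * (x - u))) x :=
    fun x => hasDerivAt_expAux a b R1 R2 u x
  have hFdiff : Differentiable ℝ F := fun x => (hFd x).differentiableAt
  have hderivF : deriv F = fun x =>
      a * R1 * Real.exp (R1 * (x - u)) + b * -R2 * Real.exp (-R2 * (x - u)) :=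
    funext fun x => (hFd x).deriv
  have hF'd : ∀ x, HasDerivAt (deriv F)
      (a * R1 * R1 * Real.exp (R1 * (x - u)) + b * -R2 * -R2 * Real.exp (-R2 * (x - u))) x := by
    rw [hderivF]; exact fun x => hasDerivAt_expAux (a * R1) (b * -R2) R1 R2 u x
  have hF'diff : Differentiable ℝ (deriv F) := fun x => (hF'd x).differentiableAt
  have hderivF2 : deriv (deriv F) = fun x =>
      a * R1 * R1 * Real.exp (R1 * (x - u)) + b * -R2 * -R2 * Real.exp (-R2 * (x - u)) :=
    funext fun x => (hF'd x).deriv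
  have hFODE : ∀ x, deriv (deriv F) x = (R1 - R2) * deriv F x + R1 * R2 * F x := by
    intro x
    rw [hderivF2, hderivF, hF]
    ring
  -- boundary values of F
  have hR1ne : R1 ≠ 0 := ne_of_gt hR1pos
  have hR2ne : R2 ≠ 0 := ne_of_gt hR2pos
  have hRsumne : R1 + R2 ≠ 0 := ne_of_gt hRsum
  have hab : a + b = μ / ρ := by
    have h1 : a + b = (R2 - R1) / (R1 * R2) := by
      rw [ha, hb]; field_simp; ring
    rw [h1, div_eq_div_iff (by positivity) (ne_of_gt hρ)]
    linear_combination key1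
  have hFu : F u = μ / ρ := by
    rw [hF]; simp only [sub_self, mul_zero, Real.exp_zero, mul_one]; exact hab
  have hF'u : deriv F u = 1 := by
    rw [hderivF]; simp only [sub_self, mul_zero, Real.exp_zero, mul_one]
    rw [ha, hb]; field_simp; ring
  -- D = V₀ - F vanishes identically
  set D : ℝ → ℝ := fun x => V₀ x - F x with hD
  have hDdiff : Differentiable ℝ D := hVdiff.sub hFdiff
  have hderivD : ∀ x, deriv D x = deriv V₀ x - deriv F x := by
    intro x; rw [hD]; exact deriv_sub (hVdiff x) (hFdiff x)
  set g : ℝ → ℝ := fun x => (deriv V₀ x - deriv F x) + R2 * D x with hg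
  have hgdiff : Differentiable ℝ g := (hV'diff.sub hF'diff).add (hDdiff.const_mul R2)
  have hderivg : ∀ x, deriv g x = R1 * g x := by
    intro x
    have e1 : deriv g x =
        (deriv (deriv V₀) x - deriv (deriv F) x) + R2 * (deriv V₀ x - deriv F x) := by
      rw [hg, deriv_fun_add ((hV'diff x).fun_sub (hF'diff x)) ((hDdiff x).const_mul R2),
        deriv_fun_sub (hV'diff x) (hF'diff x), deriv_const_mul R2 (hDdiff x), hderivD x]
    rw [e1, hW x, hFODE x]
    simp only [hg, hD]
    ring
  have hgu : g u = 0 := by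
    simp only [hg, hD]
    rw [hV'u, hF'u, hVu, hFu]; ring
  have hg0 := zero_of_deriv_eq R1 u hgdiff hderivg hgu
  have hDode : ∀ x, deriv D x = -R2 * D x := by
    intro x
    have h := hg0 x
    simp only [hg, hD] at h
    rw [hderivD x]
    simp only [hD]
    linarith
  have hDu : D u = 0 := by simp only [hD]; rw [hVu, hFu]; ring
  have hD0 := zero_of_deriv_eq (-R2) u hDdiff hDode hDu
  have hVF : V₀ = F := funext fun x => by
    have := hD0 x; simp only [hD] at this; linarith
  -- sign of F''
  have hc : 0 < R1 * R2 / (R1 + R2) := by positivity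
  have hkey : ∀ x, deriv (deriv F) x =
      R1 * R2 / (R1 + R2) * (Real.exp (R1 * (x - u)) - Real.exp (-R2 * (x - u))) := by
    intro x
    rw [hderivF2]
    rw [ha, hb]
    field_simp
    ring
  have hconv : ConvexOn ℝ (Set.Ici u) F := by
    apply convexOn_of_deriv2_nonneg' (convex_Ici u) hFdiff.differentiableOn
      hF'diff.differentiableOn
    intro x hx
    have hx' : u ≤ x := hx
    simp only [Function.iterate_succ, Function.iterate_zero, Function.comp_apply, id_eq]
    rw [hkey x]
    have : Real.exp (-R2 * (x - u)) ≤ Real.exp (R1 * (x - u)) :=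
      Real.exp_le_exp.mpr (by nlinarith)
    nlinarith
  have hconc : ConcaveOn ℝ (Set.Iic u) F := by
    apply concaveOn_of_deriv2_nonpos' (convex_Iic u) hFdiff.differentiableOn
      hF'diff.differentiableOn
    intro x hx
    have hx' : x ≤ u := hx
    simp only [Function.iterate_succ, Function.iterate_zero, Function.comp_apply, id_eq]
    rw [hkey x]
    have : Real.exp (R1 * (x - u)) ≤ Real.exp (-R2 * (x - u)) :=
      Real.exp_le_exp.mpr (by nlinarith)
    nlinarith
  refine ⟨?_, ?_, hWu⟩
  · rw [hVF]; exact hconc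
  · rw [hVF]; exact hconv



end
end

section
/- For every x > 0 and t > 0, the function p satisfies ∂p/∂t(x,t) ≥ 0 and ∂p/∂x(x,t) ≤ 0, and for every fixed t > 0 the function x ↦ p(x,t) is convex on (0,∞). Moreover p solves the equation ∂p/∂t = (σ²/2)∂²p/∂x² + μ·∂p/∂x for x > 0, t > 0, with p(0⁺,t) = 1 for t > 0 and p(x,0⁺) = 0 for x > 0, and 0 ≤ p(x,t) ≤ 1. -/
open Real MeasureTheory Filter Set

noncomputable section

variable (μ σ ρ : ℝ)

/-! ### Auxiliary machinery for `stmt2` -/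

/-- The (unnormalized) Gaussian density. -/
def gp (u : ℝ) : ℝ := Real.exp (-u^2/2)

lemma gp_eq : gp = fun u => Real.exp (-(1/2) * u^2) := by
  funext u; simp only [gp]; ring_nf

lemma gp_int : Integrable gp := by
  rw [gp_eq]; exact integrable_exp_neg_mul_sq one_half_pos

lemma gp_cont : Continuous gp := by
  rw [gp_eq]; exact (continuous_const.mul (continuous_pow 2)).rexp

lemma gp_pos (u : ℝ) : 0 < gp u := Real.exp_pos _

lemma gp_tot : ∫ u, gp u = Real.sqrt (2*π) := by
  rw [gp_eq, integral_gaussian]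
  norm_num [mul_comm]

lemma hasDerivAt_gp (z : ℝ) : HasDerivAt gp (gp z * (-z)) z := by
  have h : HasDerivAt (fun u : ℝ => -u^2/2) (-z) z := by
    have := ((hasDerivAt_pow 2 z).fun_neg).div_const 2
    convert this using 1
    · rfl
    · rfl
    push_cast; ring
  have h2 := h.exp
  have hfun : (fun u : ℝ => Real.exp (-u^2/2)) = gp := by funext u; rw [gp]
  rw [hfun] at h2
  convert h2 using 1
  rw [gp]

/-- The Gaussian upper tail (unnormalized). -/
def Qf (z : ℝ) : ℝ := ∫ u in Ioi z, gp u

lemma IQ_add_Q (z : ℝ) : (∫ u in Iic z, gp u) + Qf z = Real.sqrt (2*π) := by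
  rw [Qf, intervalIntegral.integral_Iic_add_Ioi gp_int.integrableOn gp_int.integrableOn, gp_tot]

lemma hasDerivAt_IQ (z : ℝ) : HasDerivAt (fun w => ∫ u in Iic w, gp u) (gp z) z := by
  have h : (fun w => ∫ u in Iic w, gp u)
      = fun w => (∫ u in Iic (0:ℝ), gp u) + ∫ u in (0:ℝ)..w, gp u := by
    funext w
    rw [← intervalIntegral.integral_Iic_sub_Iic gp_int.integrableOn gp_int.integrableOn]
    ring
  rw [h]
  exact (intervalIntegral.integral_hasDerivAt_right gp_int.intervalIntegrable
    gp_cont.aestronglyMeasurable.stronglyMeasurableAtFilter gp_cont.continuousAt).const_add _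

lemma hasDerivAt_Q (z : ℝ) : HasDerivAt Qf (-gp z) z := by
  have h : Qf = fun w => Real.sqrt (2*π) - ∫ u in Iic w, gp u := by
    funext w; have := IQ_add_Q w; linarith
  rw [h]
  simpa using (hasDerivAt_IQ z).const_sub (Real.sqrt (2*π))

lemma Q_nonneg (z : ℝ) : 0 ≤ Qf z :=
  setIntegral_nonneg measurableSet_Ioi fun u _ => (gp_pos u).le

lemma Q_le (z : ℝ) : Qf z ≤ Real.sqrt (2*π) := by
  have h := IQ_add_Q z
  have : 0 ≤ ∫ u in Iic z, gp u := setIntegral_nonneg measurableSet_Iic fun u _ => (gp_pos u).le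
  linarith

lemma Q_anti : Antitone Qf := by
  intro a b hab
  exact setIntegral_mono_set gp_int.integrableOn
    (Eventually.of_forall fun u => (gp_pos u).le)
    (HasSubset.Subset.eventuallyLE (Ioi_subset_Ioi hab))

lemma Q_tendsto_atBot : Tendsto Qf atBot (nhds (Real.sqrt (2*π))) := by
  rw [← gp_tot]
  exact (aecover_Ioi tendsto_id).integral_tendsto_of_countably_generated gp_int

lemma Q_tendsto_atTop : Tendsto Qf atTop (nhds 0) := by
  have h : Tendsto (fun z => ∫ u in Iic z, gp u) atTop (nhds (Real.sqrt (2*π))) := by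
    rw [← gp_tot]
    exact (aecover_Iic tendsto_id).integral_tendsto_of_countably_generated gp_int
  have h2 : Qf = fun z => Real.sqrt (2*π) - ∫ u in Iic z, gp u := by
    funext w; have := IQ_add_Q w; linarith
  rw [h2]
  simpa using (tendsto_const_nhds (x := Real.sqrt (2*π))).sub h

lemma shift_Ioi (g : ℝ → ℝ) (a c : ℝ) :
    ∫ y in Ioi c, g (y - a) = ∫ y in Ioi (c - a), g y := by
  rw [← integral_indicator measurableSet_Ioi, ← integral_indicator measurableSet_Ioi]
  rw [show (Ioi c).indicator (fun y => g (y - a)) = fun y => (Ioi (c-a)).indicator g (y - a) by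
    funext y
    by_cases h : y ∈ Ioi c
    · rw [indicator_of_mem h, indicator_of_mem (by simpa [sub_lt_sub_iff_right] using h)]
    · rw [indicator_of_notMem h, indicator_of_notMem (by
        simp only [mem_Ioi, not_lt] at h ⊢; linarith)]]
  exact integral_sub_right_eq_self _ a

lemma scale_Ioi {c : ℝ} (hc : 0 < c) (b : ℝ) :
    ∫ y in Ioi b, Real.exp (-y^2/(2*c)) = Real.sqrt c * Qf (b / Real.sqrt c) := by
  have hs : 0 < Real.sqrt c := Real.sqrt_pos.2 hc
  have := integral_comp_mul_left_Ioi (fun y => Real.exp (-y^2/(2*c))) (b / Real.sqrt c) hs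
  rw [mul_div_cancel₀ _ hs.ne'] at this
  have h2 : (fun u => Real.exp (-(Real.sqrt c * u)^2/(2*c))) = gp := by
    funext u
    rw [gp]
    congr 1
    rw [mul_pow, Real.sq_sqrt hc.le]
    field_simp
  rw [h2] at this
  rw [← Qf] at this
  rw [this, smul_eq_mul, ← mul_assoc, mul_inv_cancel₀ hs.ne', one_mul]

lemma gauss_Ioi {c : ℝ} (hc : 0 < c) (a : ℝ) :
    ∫ y in Ioi (0:ℝ), Real.exp (-(y-a)^2/(2*c)) = Real.sqrt c * Qf (-a / Real.sqrt c) := by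
  rw [shift_Ioi (fun y => Real.exp (-y^2/(2*c))) a 0, zero_sub]
  exact scale_Ioi hc (-a)

lemma int_gauss {c : ℝ} (hc : 0 < c) (a : ℝ) :
    Integrable (fun y => Real.exp (-(y-a)^2/(2*c))) := by
  have h : (fun y : ℝ => Real.exp (-(1/(2*c)) * y^2)) = fun y => Real.exp (-y^2/(2*c)) := by
    funext y; congr 1; field_simp
  have := (integrable_exp_neg_mul_sq (b := 1/(2*c)) (by positivity))
  rw [h] at this
  exact this.comp_sub_right a

/-- Normalizing constant. -/
def c0 : ℝ := (Real.sqrt (2*π))⁻¹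

lemma c0_pos : 0 < c0 := by
  rw [c0]; positivity

lemma c0_mul : c0 * Real.sqrt (2*π) = 1 := by
  rw [c0]
  exact inv_mul_cancel₀ (by positivity)

def z1f (x t : ℝ) : ℝ := -((x + μ*t) / (σ * Real.sqrt t))
def z2f (x t : ℝ) : ℝ := (x - μ*t) / (σ * Real.sqrt t)

/-- Closed form of `pf`. -/
def Ff (x t : ℝ) : ℝ :=
  1 - c0 * Qf (z1f μ σ x t) + c0 * Real.exp (-(2*μ*x/σ^2)) * Qf (z2f μ σ x t)

/-- `∂F/∂x`. -/
def Fx (x t : ℝ) : ℝ :=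
  -(c0 * gp (z1f μ σ x t) / (σ * Real.sqrt t))
  - c0 * (2*μ/σ^2) * Real.exp (-(2*μ*x/σ^2)) * Qf (z2f μ σ x t)
  - c0 * Real.exp (-(2*μ*x/σ^2)) * gp (z2f μ σ x t) / (σ * Real.sqrt t)

/-- `∂²F/∂x²`. -/
def Fxx (x t : ℝ) : ℝ :=
  c0 * gp (z1f μ σ x t) * (2*x/(σ * Real.sqrt t)^3 + 4*μ/(σ^2*(σ * Real.sqrt t)))
  + c0 * (4*μ^2/σ^4) * Real.exp (-(2*μ*x/σ^2)) * Qf (z2f μ σ x t)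

/-- `∂F/∂t`. -/
def Ft (x t : ℝ) : ℝ := c0 * gp (z1f μ σ x t) * x / (σ * t * Real.sqrt t)

lemma sqrt_c (hσ : 0 < σ) {t : ℝ} (ht : 0 ≤ t) :
    Real.sqrt (σ^2 * t) = σ * Real.sqrt t := by
  rw [Real.sqrt_mul (sq_nonneg σ), Real.sqrt_sq hσ.le]

lemma pf_eq (hσ : 0 < σ) {t : ℝ} (ht : 0 < t) (x : ℝ) :
    pf μ σ x t = Ff μ σ x t := by
  have hc : 0 < σ^2 * t := by positivity
  have hst : 0 < σ * Real.sqrt t := by positivity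
  have hsc : Real.sqrt (σ^2 * t) = σ * Real.sqrt t := sqrt_c σ hσ ht.le
  have hE1 : (fun y => Real.exp (-(x - y + μ * t) ^ 2 / (2 * σ ^ 2 * t)))
      = fun y => Real.exp (-(y-(x+μ*t))^2/(2*(σ^2*t))) := by
    funext y; congr 1; ring
  have hE2 : (fun y => Real.exp (-(2 * μ * x / σ ^ 2) - (x + y - μ * t) ^ 2 / (2 * σ ^ 2 * t)))
      = fun y => Real.exp (-(2 * μ * x / σ ^ 2)) * Real.exp (-(y-(μ*t-x))^2/(2*(σ^2*t))) := by
    funext y; rw [← Real.exp_add]; congr 1; ring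
  have key : ∫ y in Set.Ioi (0:ℝ), G μ σ x y t
      = (Real.sqrt (2 * Real.pi * σ ^ 2 * t))⁻¹ *
        ((σ * Real.sqrt t) * Qf (z1f μ σ x t)
          - Real.exp (-(2 * μ * x / σ ^ 2)) * ((σ * Real.sqrt t) * Qf (z2f μ σ x t))) := by
    simp only [G]
    rw [integral_const_mul]
    congr 1
    simp only [congrFun hE1, congrFun hE2]
    rw [integral_sub (int_gauss hc (x+μ*t)).integrableOn
        (((int_gauss hc (μ*t-x)).const_mul _).integrableOn),
      integral_const_mul, gauss_Ioi hc (x+μ*t), gauss_Ioi hc (μ*t-x), hsc]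
    have e1 : -(x+μ*t) / (σ * Real.sqrt t) = z1f μ σ x t := by rw [z1f]; ring
    have e2 : -(μ*t-x) / (σ * Real.sqrt t) = z2f μ σ x t := by rw [z2f]; ring
    rw [e1, e2]
  rw [pf, key, Ff]
  have hK : (Real.sqrt (2 * Real.pi * σ ^ 2 * t))⁻¹ * (σ * Real.sqrt t) = c0 := by
    rw [show 2 * Real.pi * σ ^ 2 * t = (2*π) * (σ^2*t) by ring,
      Real.sqrt_mul (by positivity), hsc, c0, mul_inv]
    field_simp
  have expand : (Real.sqrt (2 * Real.pi * σ ^ 2 * t))⁻¹ *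
      (σ * Real.sqrt t * Qf (z1f μ σ x t) -
        Real.exp (-(2 * μ * x / σ ^ 2)) * (σ * Real.sqrt t * Qf (z2f μ σ x t)))
      = c0 * Qf (z1f μ σ x t) - c0 * Real.exp (-(2 * μ * x / σ ^ 2)) * Qf (z2f μ σ x t) := by
    rw [← hK]; ring
  rw [expand]; ring

lemma hrel1 (hσ : 0 < σ) {t : ℝ} (ht : 0 < t) (x : ℝ) :
    Real.exp (-(2*μ*x/σ^2)) * gp (z2f μ σ x t) = gp (z1f μ σ x t) := by
  rw [gp, gp, z1f, z2f, ← Real.exp_add]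
  congr 1
  have hu : Real.sqrt t ≠ 0 := (Real.sqrt_pos.2 ht).ne'
  have hsq : Real.sqrt t * Real.sqrt t = t := Real.mul_self_sqrt ht.le
  set u := Real.sqrt t with hu_def
  rw [← hsq]
  field_simp
  ring

lemma hrel2 (x t : ℝ) :
    z2f μ σ x t - z1f μ σ x t = 2*x/(σ * Real.sqrt t) := by
  rw [z1f, z2f]; ring

lemma hEderiv (x : ℝ) : HasDerivAt (fun x => Real.exp (-(2*μ*x/σ^2)))
    (Real.exp (-(2*μ*x/σ^2)) * (-(2*μ/σ^2))) x := by
  have h : HasDerivAt (fun x : ℝ => -(2*μ*x/σ^2)) (-(2*μ/σ^2)) x := by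
    simpa using (((hasDerivAt_id x).const_mul (2*μ)).div_const (σ^2)).fun_neg
  exact h.exp

lemma hz1x (x t : ℝ) : HasDerivAt (fun x => z1f μ σ x t) (-(1/(σ * Real.sqrt t))) x := by
  have := (((hasDerivAt_id x).add_const (μ*t)).div_const (σ * Real.sqrt t)).fun_neg
  simpa [z1f] using this

lemma hz2x (x t : ℝ) : HasDerivAt (fun x => z2f μ σ x t) (1/(σ * Real.sqrt t)) x := by
  have := ((hasDerivAt_id x).sub_const (μ*t)).div_const (σ * Real.sqrt t)
  simpa [z2f] using this

lemma hFx (x t : ℝ) : HasDerivAt (fun x => Ff μ σ x t) (Fx μ σ x t) x := by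
  have h1 : HasDerivAt (fun x => Qf (z1f μ σ x t))
      (-gp (z1f μ σ x t) * (-(1/(σ * Real.sqrt t)))) x :=
    (hasDerivAt_Q _).comp x (hz1x μ σ x t)
  have h2 : HasDerivAt (fun x => Qf (z2f μ σ x t))
      (-gp (z2f μ σ x t) * (1/(σ * Real.sqrt t))) x :=
    (hasDerivAt_Q _).comp x (hz2x μ σ x t)
  have H := ((h1.const_mul c0).const_sub 1).fun_add (((hEderiv μ σ x).fun_mul h2).const_mul c0)
  convert H using 1
  · rfl
  · rfl
  · funext y; rw [Ff]; ring
  · rw [Fx]; ring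

lemma hFxx (hσ : 0 < σ) {t : ℝ} (ht : 0 < t) (x : ℝ) :
    HasDerivAt (fun x => Fx μ σ x t) (Fxx μ σ x t) x := by
  have hg1 : HasDerivAt (fun x => gp (z1f μ σ x t))
      (gp (z1f μ σ x t) * (-(z1f μ σ x t)) * (-(1/(σ * Real.sqrt t)))) x :=
    (hasDerivAt_gp _).comp x (hz1x μ σ x t)
  have hg2 : HasDerivAt (fun x => gp (z2f μ σ x t))
      (gp (z2f μ σ x t) * (-(z2f μ σ x t)) * (1/(σ * Real.sqrt t))) x :=
    (hasDerivAt_gp _).comp x (hz2x μ σ x t)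
  have h2 : HasDerivAt (fun x => Qf (z2f μ σ x t))
      (-gp (z2f μ σ x t) * (1/(σ * Real.sqrt t))) x :=
    (hasDerivAt_Q _).comp x (hz2x μ σ x t)
  have H := (((hg1.const_mul c0).div_const (σ * Real.sqrt t)).fun_neg.fun_sub
      ((((hEderiv μ σ x).fun_mul h2).const_mul (c0 * (2*μ/σ^2))))).fun_sub
      ((((hEderiv μ σ x).fun_mul hg2).const_mul c0).div_const (σ * Real.sqrt t))
  convert H using 1
  · rfl
  · rfl
  · funext y; rw [Fx]; ring
  · rw [Fxx]
    have e1 := hrel1 μ σ hσ ht x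
    have e2 := hrel2 μ σ x t
    set s := σ * Real.sqrt t
    linear_combination c0 * (-(z2f μ σ x t)/s^2 - 4*μ/(σ^2*s)) * e1
      + (-(c0 * gp (z1f μ σ x t))/s^2) * e2

lemma hFt (hσ : 0 < σ) {t : ℝ} (ht : 0 < t) (x : ℝ) :
    HasDerivAt (fun t => Ff μ σ x t) (Ft μ σ x t) t := by
  have hu : (0:ℝ) < Real.sqrt t := Real.sqrt_pos.2 ht
  have hd : HasDerivAt (fun t : ℝ => σ * Real.sqrt t) (σ * (1/(2*Real.sqrt t))) t :=
    (Real.hasDerivAt_sqrt ht.ne').const_mul σ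
  have hden : σ * Real.sqrt t ≠ 0 := by positivity
  have hn1 : HasDerivAt (fun t : ℝ => x + μ*t) μ t := by
    simpa using ((hasDerivAt_id t).const_mul μ).const_add x
  have hn2 : HasDerivAt (fun t : ℝ => x - μ*t) (-μ) t := by
    simpa using ((hasDerivAt_id t).const_mul μ).const_sub x
  have hz1 : HasDerivAt (fun t => z1f μ σ x t)
      (-((μ * (σ * Real.sqrt t) - (x + μ*t) * (σ * (1/(2*Real.sqrt t)))) /
        (σ * Real.sqrt t)^2)) t := by
    have := (hn1.fun_div hd hden).fun_neg
    simpa [z1f] using this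
  have hz2 : HasDerivAt (fun t => z2f μ σ x t)
      ((-μ * (σ * Real.sqrt t) - (x - μ*t) * (σ * (1/(2*Real.sqrt t)))) /
        (σ * Real.sqrt t)^2) t := by
    have := hn2.fun_div hd hden
    simpa [z2f] using this
  have h1 : HasDerivAt (fun s => Qf (z1f μ σ x s))
      (-gp (z1f μ σ x t) * (-((μ * (σ * Real.sqrt t) - (x + μ*t) * (σ * (1/(2*Real.sqrt t)))) /
        (σ * Real.sqrt t)^2))) t := (hasDerivAt_Q _).comp t hz1
  have h2 : HasDerivAt (fun s => Qf (z2f μ σ x s))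
      (-gp (z2f μ σ x t) * ((-μ * (σ * Real.sqrt t) - (x - μ*t) * (σ * (1/(2*Real.sqrt t)))) /
        (σ * Real.sqrt t)^2)) t := (hasDerivAt_Q _).comp t hz2
  have H : HasDerivAt (fun s => Ff μ σ x s)
      (-(c0 * (-gp (z1f μ σ x t) * (-((μ * (σ * Real.sqrt t) - (x + μ*t) * (σ * (1/(2*Real.sqrt t)))) /
          (σ * Real.sqrt t)^2)))) +
        c0 * Real.exp (-(2*μ*x/σ^2)) * (-gp (z2f μ σ x t) *
          ((-μ * (σ * Real.sqrt t) - (x - μ*t) * (σ * (1/(2*Real.sqrt t)))) / (σ * Real.sqrt t)^2))) t := by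
    have := ((h1.const_mul c0).const_sub 1).fun_add (h2.const_mul (c0 * Real.exp (-(2*μ*x/σ^2))))
    convert this using 1
    · rfl
    · rfl
    all_goals first
      | (funext s; rw [Ff])
      | ring
  convert H using 1
  rw [Ft]
  have e1 := hrel1 μ σ hσ ht x
  have hsq : Real.sqrt t * Real.sqrt t = t := Real.mul_self_sqrt ht.le
  have hune : Real.sqrt t ≠ 0 := (Real.sqrt_pos.2 ht).ne'
  set u := Real.sqrt t with hu_def
  set A := gp (z1f μ σ x t) with hA
  set B := gp (z2f μ σ x t) with hB
  rw [← e1, ← hsq]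
  field_simp
  ring

lemma pde_iden (hμ : 0 < μ) (hσ : 0 < σ) {t : ℝ} (ht : 0 < t) (x : ℝ) :
    Ft μ σ x t = σ^2/2 * Fxx μ σ x t + μ * Fx μ σ x t := by
  have e1 := hrel1 μ σ hσ ht x
  have hsq : Real.sqrt t * Real.sqrt t = t := Real.mul_self_sqrt ht.le
  have hu : Real.sqrt t ≠ 0 := (Real.sqrt_pos.2 ht).ne'
  rw [Ft, Fxx, Fx]
  set u := Real.sqrt t with hu_def
  set A := gp (z1f μ σ x t) with hA
  set B := gp (z2f μ σ x t) with hB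
  set Bq := Qf (z2f μ σ x t) with hBq
  rw [← e1, ← hsq]
  field_simp
  ring


/-- monotonicity, convexity, PDE, boundary/initial behaviour and bounds for `p`. -/
theorem stmt2 (hμ : 0 < μ) (hσ : 0 < σ) :
    (∀ t > (0:ℝ),
      (∀ x > (0:ℝ),
        0 ≤ deriv (fun s => pf μ σ x s) t ∧
        deriv (fun y => pf μ σ y t) x ≤ 0 ∧
        deriv (fun s => pf μ σ x s) t =
          σ ^ 2 / 2 * deriv (deriv (fun y => pf μ σ y t)) x +
            μ * deriv (fun y => pf μ σ y t) x ∧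
        0 ≤ pf μ σ x t ∧ pf μ σ x t ≤ 1) ∧
      ConvexOn ℝ (Set.Ioi 0) (fun y => pf μ σ y t) ∧
      Filter.Tendsto (fun x => pf μ σ x t) (nhdsWithin 0 (Set.Ioi 0)) (nhds 1)) ∧
    (∀ x > (0:ℝ),
      Filter.Tendsto (fun t => pf μ σ x t) (nhdsWithin 0 (Set.Ioi 0)) (nhds 0)) := by
  constructor
  · intro t ht
    have hut : (0:ℝ) < Real.sqrt t := Real.sqrt_pos.2 ht
    have hst : (0:ℝ) < σ * Real.sqrt t := by positivity
    have hfeq : (fun y => pf μ σ y t) = fun y => Ff μ σ y t := funext fun y => pf_eq μ σ hσ ht y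
    have hd1 : deriv (fun y => pf μ σ y t) = fun y => Fx μ σ y t := by
      rw [hfeq]; funext y; exact (hFx μ σ y t).deriv
    have hdiff : Differentiable ℝ (fun y => Ff μ σ y t) := fun y => (hFx μ σ y t).differentiableAt
    have hdt : ∀ x : ℝ, deriv (fun s => pf μ σ x s) t = Ft μ σ x t := by
      intro x
      have he : (fun s => pf μ σ x s) =ᶠ[nhds t] fun s => Ff μ σ x s := by
        filter_upwards [Ioi_mem_nhds ht] with s hs
        exact pf_eq μ σ hσ hs x
      rw [he.deriv_eq]
      exact (hFt μ σ hσ ht x).deriv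
    refine ⟨fun x hx => ⟨?_, ?_, ?_, ?_, ?_⟩, ?_, ?_⟩
    · -- time monotonicity
      rw [hdt x, Ft]
      have h1 : (0:ℝ) < σ * t * Real.sqrt t := by positivity
      exact div_nonneg (mul_nonneg (mul_nonneg c0_pos.le (gp_pos _).le) hx.le) h1.le
    · -- space monotonicity
      rw [hd1]
      show Fx μ σ x t ≤ 0
      have t1 : 0 ≤ c0 * gp (z1f μ σ x t) / (σ * Real.sqrt t) :=
        div_nonneg (mul_nonneg c0_pos.le (gp_pos _).le) hst.le
      have t2 : 0 ≤ c0 * (2*μ/σ^2) * Real.exp (-(2*μ*x/σ^2)) * Qf (z2f μ σ x t) :=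
        mul_nonneg (mul_nonneg (mul_nonneg c0_pos.le (by positivity)) (Real.exp_pos _).le)
          (Q_nonneg _)
      have t3 : 0 ≤ c0 * Real.exp (-(2*μ*x/σ^2)) * gp (z2f μ σ x t) / (σ * Real.sqrt t) :=
        div_nonneg (mul_nonneg (mul_nonneg c0_pos.le (Real.exp_pos _).le) (gp_pos _).le) hst.le
      rw [Fx]
      linarith
    · -- PDE
      rw [hdt x, hd1, (hFxx μ σ hσ ht x).deriv]
      show Ft μ σ x t = σ ^ 2 / 2 * Fxx μ σ x t + μ * Fx μ σ x t
      exact pde_iden μ σ hμ hσ ht x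
    · -- 0 ≤ pf
      rw [pf_eq μ σ hσ ht x, Ff]
      have h1 : c0 * Qf (z1f μ σ x t) ≤ 1 := by
        have := mul_le_mul_of_nonneg_left (Q_le (z1f μ σ x t)) c0_pos.le
        rwa [c0_mul] at this
      have h2 : 0 ≤ c0 * Real.exp (-(2*μ*x/σ^2)) * Qf (z2f μ σ x t) :=
        mul_nonneg (mul_nonneg c0_pos.le (Real.exp_pos _).le) (Q_nonneg _)
      linarith
    · -- pf ≤ 1
      rw [pf_eq μ σ hσ ht x, Ff]
      have hz : z1f μ σ x t ≤ z2f μ σ x t := by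
        have h := hrel2 μ σ x t
        have h2x : 0 ≤ 2*x/(σ * Real.sqrt t) := by positivity
        linarith
      have hQ : Qf (z2f μ σ x t) ≤ Qf (z1f μ σ x t) := Q_anti hz
      have hE : Real.exp (-(2*μ*x/σ^2)) ≤ 1 := by
        rw [Real.exp_le_one_iff]
        have : 0 ≤ 2*μ*x/σ^2 := by positivity
        linarith
      have hEQ : Real.exp (-(2*μ*x/σ^2)) * Qf (z2f μ σ x t) ≤ Qf (z1f μ σ x t) :=
        le_trans (mul_le_of_le_one_left (Q_nonneg _) hE) hQ
      have h3 : c0 * Real.exp (-(2*μ*x/σ^2)) * Qf (z2f μ σ x t) ≤ c0 * Qf (z1f μ σ x t) := by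
        rw [mul_assoc]
        exact mul_le_mul_of_nonneg_left hEQ c0_pos.le
      linarith
    · -- convexity
      rw [hfeq]
      have hderiv : deriv (fun y => Ff μ σ y t) = fun y => Fx μ σ y t :=
        funext fun y => (hFx μ σ y t).deriv
      apply convexOn_of_deriv2_nonneg (convex_Ioi 0)
      · exact hdiff.continuous.continuousOn
      · exact hdiff.differentiableOn
      · rw [hderiv]
        have hd2 : Differentiable ℝ fun y => Fx μ σ y t :=
          fun y => (hFxx μ σ hσ ht y).differentiableAt
        exact hd2.differentiableOn
      · intro x hx
        rw [interior_Ioi] at hx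
        have h2 : deriv^[2] (fun y => Ff μ σ y t) x = Fxx μ σ x t := by
          rw [Function.iterate_succ_apply', Function.iterate_one, hderiv]
          exact (hFxx μ σ hσ ht x).deriv
        rw [h2, Fxx]
        have hb : 0 ≤ 2*x/(σ * Real.sqrt t)^3 + 4*μ/(σ^2*(σ * Real.sqrt t)) := by
          have hx' : (0:ℝ) < x := hx
          positivity
        have h4 : 0 ≤ c0 * gp (z1f μ σ x t) * (2*x/(σ * Real.sqrt t)^3 + 4*μ/(σ^2*(σ * Real.sqrt t))) :=
          mul_nonneg (mul_nonneg c0_pos.le (gp_pos _).le) hb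
        have h5 : 0 ≤ c0 * (4*μ^2/σ^4) * Real.exp (-(2*μ*x/σ^2)) * Qf (z2f μ σ x t) :=
          mul_nonneg (mul_nonneg (mul_nonneg c0_pos.le (by positivity)) (Real.exp_pos _).le)
            (Q_nonneg _)
        linarith
    · -- boundary value at 0
      have hval : Ff μ σ 0 t = 1 := by
        rw [Ff]
        have h12 : z1f μ σ 0 t = z2f μ σ 0 t := by rw [z1f, z2f]; ring
        rw [h12]
        norm_num
      have hcont : Tendsto (fun x => Ff μ σ x t) (nhds 0) (nhds 1) := by
        rw [← hval]
        exact ((hFx μ σ 0 t).differentiableAt.continuousAt).tendsto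
      rw [show (fun x => pf μ σ x t) = fun x => Ff μ σ x t from funext fun y => pf_eq μ σ hσ ht y]
      exact hcont.mono_left nhdsWithin_le_nhds
  · -- initial condition
    intro x hx
    have heq : (fun t => pf μ σ x t) =ᶠ[nhdsWithin 0 (Set.Ioi 0)] fun t => Ff μ σ x t := by
      filter_upwards [self_mem_nhdsWithin] with s hs
      exact pf_eq μ σ hσ hs x
    rw [tendsto_congr' heq]
    have hstp : Tendsto (fun t : ℝ => σ * Real.sqrt t) (nhdsWithin 0 (Set.Ioi 0))
        (nhdsWithin 0 (Set.Ioi 0)) := by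
      refine tendsto_nhdsWithin_iff.mpr ⟨?_, ?_⟩
      · have hc : Continuous fun t : ℝ => σ * Real.sqrt t :=
          continuous_const.mul Real.continuous_sqrt
        have h0 := (hc.tendsto 0).mono_left (nhdsWithin_le_nhds (s := Set.Ioi (0:ℝ)))
        simpa using h0
      · filter_upwards [self_mem_nhdsWithin] with s hs
        exact mul_pos hσ (Real.sqrt_pos.2 hs)
    have hinv : Tendsto (fun t : ℝ => (σ * Real.sqrt t)⁻¹) (nhdsWithin 0 (Set.Ioi 0)) atTop :=
      tendsto_inv_nhdsGT_zero.comp hstp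
    have hnum1 : Tendsto (fun t : ℝ => x + μ*t) (nhdsWithin 0 (Set.Ioi 0)) (nhds x) := by
      have hc : Continuous fun t : ℝ => x + μ*t := by continuity
      have := (hc.tendsto 0).mono_left (nhdsWithin_le_nhds (s := Set.Ioi (0:ℝ)))
      simpa using this
    have hnum2 : Tendsto (fun t : ℝ => x - μ*t) (nhdsWithin 0 (Set.Ioi 0)) (nhds x) := by
      have hc : Continuous fun t : ℝ => x - μ*t := by continuity
      have := (hc.tendsto 0).mono_left (nhdsWithin_le_nhds (s := Set.Ioi (0:ℝ)))
      simpa using this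
    have hz1 : Tendsto (fun t => z1f μ σ x t) (nhdsWithin 0 (Set.Ioi 0)) atBot := by
      have h := Filter.Tendsto.pos_mul_atTop hx hnum1 hinv
      have he : (fun t => z1f μ σ x t) = fun t => -((x + μ*t) * (σ * Real.sqrt t)⁻¹) := by
        funext s; rw [z1f, div_eq_mul_inv]
      rw [he]
      exact tendsto_neg_atTop_atBot.comp h
    have hz2 : Tendsto (fun t => z2f μ σ x t) (nhdsWithin 0 (Set.Ioi 0)) atTop := by
      have h := Filter.Tendsto.pos_mul_atTop hx hnum2 hinv
      have he : (fun t => z2f μ σ x t) = fun t => (x - μ*t) * (σ * Real.sqrt t)⁻¹ := by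
        funext s; rw [z2f, div_eq_mul_inv]
      rw [he]
      exact h
    have l1 : Tendsto (fun t => Qf (z1f μ σ x t)) (nhdsWithin 0 (Set.Ioi 0))
        (nhds (Real.sqrt (2*π))) := Q_tendsto_atBot.comp hz1
    have l2 : Tendsto (fun t => Qf (z2f μ σ x t)) (nhdsWithin 0 (Set.Ioi 0)) (nhds 0) :=
      Q_tendsto_atTop.comp hz2
    have hfin : Tendsto (fun t => Ff μ σ x t) (nhdsWithin 0 (Set.Ioi 0))
        (nhds (1 - c0 * Real.sqrt (2*π) + c0 * Real.exp (-(2*μ*x/σ^2)) * 0)) := by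
      simp only [Ff]
      exact ((tendsto_const_nhds (x := (1:ℝ))).sub (l1.const_mul c0)).add
        (l2.const_mul (c0 * Real.exp (-(2*μ*x/σ^2))))
    rw [show (1:ℝ) - c0 * Real.sqrt (2*π) + c0 * Real.exp (-(2*μ*x/σ^2)) * 0 = 0 from by
      rw [c0_mul]; ring] at hfin
    exact hfin

end
end

section
/- The limit as t → 0⁺ of √(2πσ²t)·∂p/∂x(0,t) equals −2, where ∂p/∂x(0,t) denotes the one-sided spatial derivative of p at x = 0. -/
open Real MeasureTheory Filter Set

noncomputable section

variable (μ σ ρ : ℝ)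

namespace Stmt4Aux


def gauss (u : ℝ) : ℝ := (Real.sqrt (2 * π))⁻¹ * Real.exp (-u ^ 2 / 2)

lemma gauss_cont : Continuous gauss := by
  unfold gauss; fun_prop

lemma gauss_integrable : Integrable gauss := by
  have h : Integrable (fun u : ℝ => Real.exp (-(1/2 : ℝ) * u ^ 2)) :=
    integrable_exp_neg_mul_sq (by norm_num)
  have h2 : Integrable (fun u : ℝ => Real.exp (-u ^ 2 / 2)) := by
    convert h using 2 with u; ring_nf
  exact h2.const_mul _

def Q (a : ℝ) : ℝ := ∫ u in Ioi a, gauss u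

lemma Q_sub {a b : ℝ} (hab : a ≤ b) : Q a - Q b = ∫ u in a..b, gauss u := by
  have h1 : Q a = (∫ u in Ioc a b, gauss u) + Q b := by
    unfold Q
    rw [← setIntegral_union]
    · rw [Ioc_union_Ioi_eq_Ioi hab]
    · exact Ioc_disjoint_Ioi le_rfl
    · exact measurableSet_Ioi
    · exact gauss_integrable.integrableOn
    · exact gauss_integrable.integrableOn
  rw [intervalIntegral.integral_of_le hab, h1]; ring

lemma Q_eq (a : ℝ) : Q a = Q 0 - ∫ u in (0:ℝ)..a, gauss u := by
  rcases le_total 0 a with h | h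
  · have := Q_sub h; linarith
  · have := Q_sub h
    rw [intervalIntegral.integral_symm]
    linarith

lemma hasDerivAt_Q (a : ℝ) : HasDerivAt Q (-gauss a) a := by
  have h1 : HasDerivAt (fun b => ∫ u in (0:ℝ)..b, gauss u) (gauss a) a := by
    refine intervalIntegral.integral_hasDerivAt_right
      gauss_integrable.intervalIntegrable
      gauss_cont.aestronglyMeasurable.stronglyMeasurableAtFilter
      gauss_cont.continuousAt
  have h2 := (hasDerivAt_const a (Q 0)).sub h1
  simp only [zero_sub] at h2
  exact h2.congr_deriv rfl |>.congr_of_eventuallyEq (Eventually.of_forall fun b => (Q_eq b))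

lemma Q_continuous : Continuous Q := by
  have : Differentiable ℝ Q := fun a => (hasDerivAt_Q a).differentiableAt
  exact this.continuous

/-- translation on Ioi -/
lemma integral_Ioi_sub (f : ℝ → ℝ) (a m : ℝ) :
    ∫ y in Ioi a, f (y - m) = ∫ y in Ioi (a - m), f y := by
  rw [← integral_indicator measurableSet_Ioi, ← integral_indicator measurableSet_Ioi,
    ← integral_sub_right_eq_self (Set.indicator (Ioi (a - m)) f) m]
  congr 1; ext y
  by_cases h : y ∈ Ioi a
  · rw [indicator_of_mem h, indicator_of_mem (by simpa using sub_lt_sub_right h m)]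
  · rw [indicator_of_notMem h, indicator_of_notMem]
    simp only [mem_Ioi, not_lt] at h ⊢
    exact sub_le_sub_right h m

/-- Gaussian half line integral in terms of Q. -/
lemma gauss_int {s : ℝ} (hs : 0 < s) (m a : ℝ) :
    ∫ y in Ioi a, (Real.sqrt (2 * π * s))⁻¹ * Real.exp (-(y - m) ^ 2 / (2 * s))
      = Q ((a - m) / Real.sqrt s) := by
  have hss : 0 < Real.sqrt s := Real.sqrt_pos.mpr hs
  have key : ∀ u : ℝ, (Real.sqrt (2 * π * s))⁻¹ * Real.exp (-u ^ 2 / (2 * s))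
      = (Real.sqrt s)⁻¹ * gauss (u / Real.sqrt s) := by
    intro u
    unfold gauss
    rw [show (2 : ℝ) * π * s = (2 * π) * s by ring,
      Real.sqrt_mul (by positivity) s]
    rw [div_pow, Real.sq_sqrt hs.le]
    rw [mul_inv]
    have : -u ^ 2 / s / 2 = -u ^ 2 / (2 * s) := by ring
    field_simp
  simp_rw [key]
  rw [integral_const_mul]
  have sub1 : ∫ y in Ioi a, gauss ((y - m) / Real.sqrt s)
      = ∫ y in Ioi (a - m), gauss (y / Real.sqrt s) := by
    exact integral_Ioi_sub (fun y => gauss (y / Real.sqrt s)) a m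
  rw [sub1]
  have sub2 : ∫ y in Ioi (a - m), gauss (y / Real.sqrt s)
      = Real.sqrt s • ∫ u in Ioi ((a - m) / Real.sqrt s), gauss u := by
    have := integral_comp_mul_left_Ioi gauss (a - m) (b := (Real.sqrt s)⁻¹)
      (inv_pos.mpr hss)
    simp_rw [inv_mul_eq_div] at this
    rw [this, inv_inv]
  rw [sub2]
  simp only [smul_eq_mul]
  rw [← mul_assoc, inv_mul_cancel₀ hss.ne', one_mul]
  rfl


lemma gauss_neg (a : ℝ) : gauss (-a) = gauss a := by unfold gauss; rw [neg_pow]; norm_num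

lemma gauss_integrable' {s : ℝ} (hs : 0 < s) (m : ℝ) :
    Integrable (fun y : ℝ => Real.exp (-(y - m) ^ 2 / (2 * s))) := by
  have h1 : Integrable (fun y : ℝ => Real.exp (-(1 / (2 * s)) * (y - m) ^ 2)) :=
    (integrable_exp_neg_mul_sq (by positivity)).comp_sub_right m
  have : (fun y : ℝ => Real.exp (-(y - m) ^ 2 / (2 * s)))
      = fun y : ℝ => Real.exp (-(1 / (2 * s)) * (y - m) ^ 2) := by
    funext y; congr 1; field_simp
  rw [this]; exact h1

lemma pf_eq {σ t : ℝ} (μ : ℝ) (hσ : 0 < σ) (ht : 0 < t) (x : ℝ) :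
    pf μ σ x t = 1 - Q (-(x + μ * t) / (σ * Real.sqrt t))
      + Real.exp (-(2 * μ * x / σ ^ 2)) * Q ((x - μ * t) / (σ * Real.sqrt t)) := by
  have hs : (0:ℝ) < σ ^ 2 * t := by positivity
  have hsqrt : Real.sqrt (σ ^ 2 * t) = σ * Real.sqrt t := by
    rw [Real.sqrt_mul (by positivity), Real.sqrt_sq hσ.le]
  have hG : ∀ y : ℝ, G μ σ x y t =
      (Real.sqrt (2 * π * (σ ^ 2 * t)))⁻¹ * Real.exp (-(y - (x + μ * t)) ^ 2 / (2 * (σ ^ 2 * t)))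
      - Real.exp (-(2 * μ * x / σ ^ 2)) *
        ((Real.sqrt (2 * π * (σ ^ 2 * t)))⁻¹ *
          Real.exp (-(y - (μ * t - x)) ^ 2 / (2 * (σ ^ 2 * t)))) := by
    intro y
    unfold G
    have e1 : -(x - y + μ * t) ^ 2 / (2 * σ ^ 2 * t) = -(y - (x + μ * t)) ^ 2 / (2 * (σ ^ 2 * t)) := by
      ring
    have e2 : Real.exp (-(2 * μ * x / σ ^ 2) - (x + y - μ * t) ^ 2 / (2 * σ ^ 2 * t))
        = Real.exp (-(2 * μ * x / σ ^ 2)) * Real.exp (-(y - (μ * t - x)) ^ 2 / (2 * (σ ^ 2 * t))) := by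
      rw [← Real.exp_add]; congr 1; ring
    rw [e1, e2, show (2:ℝ) * π * σ ^ 2 * t = 2 * π * (σ ^ 2 * t) by ring]
    ring
  have i1 : IntegrableOn
      (fun y => (Real.sqrt (2 * π * (σ ^ 2 * t)))⁻¹ *
        Real.exp (-(y - (x + μ * t)) ^ 2 / (2 * (σ ^ 2 * t)))) (Ioi 0) := by
    exact ((gauss_integrable' hs _).const_mul _).integrableOn
  have i2 : IntegrableOn
      (fun y => Real.exp (-(2 * μ * x / σ ^ 2)) *
        ((Real.sqrt (2 * π * (σ ^ 2 * t)))⁻¹ *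
          Real.exp (-(y - (μ * t - x)) ^ 2 / (2 * (σ ^ 2 * t))))) (Ioi 0) := by
    exact (((gauss_integrable' hs _).const_mul _).const_mul _).integrableOn
  unfold pf
  rw [show (fun y => G μ σ x y t) = _ from funext hG] at *
  rw [integral_sub i1 i2, gauss_int hs, integral_const_mul, gauss_int hs]
  rw [hsqrt]
  ring_nf

lemma hasDerivAt_pf {σ t : ℝ} (μ : ℝ) (hσ : 0 < σ) (ht : 0 < t) :
    HasDerivAt (fun x => pf μ σ x t)
      (-2 * gauss (μ * Real.sqrt t / σ) / (σ * Real.sqrt t)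
        - 2 * μ / σ ^ 2 * Q (-(μ * Real.sqrt t / σ))) 0 := by
  have hc : (0:ℝ) < σ * Real.sqrt t := by positivity
  set c := σ * Real.sqrt t with hcdef
  have ha : μ * t / c = μ * Real.sqrt t / σ := by
    rw [hcdef]
    rw [show μ * t = μ * Real.sqrt t * Real.sqrt t by
      rw [mul_assoc, Real.mul_self_sqrt ht.le]]
    field_simp
  set a := μ * Real.sqrt t / σ with hadef
  -- derivative of x ↦ -(x + μ t)/c at 0, value -(μ t)/c = -a
  have h1 : HasDerivAt (fun x : ℝ => -(x + μ * t) / c) (-1 / c) 0 :=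
    (((hasDerivAt_id 0).add_const (μ * t)).neg).div_const c
  have hQ1 : HasDerivAt (fun x : ℝ => Q (-(x + μ * t) / c)) (-gauss (-a) * (-1 / c)) 0 := by
    have hcmp := (hasDerivAt_Q (-(0 + μ * t) / c)).comp 0 h1
    have e : -(0 + μ * t) / c = -a := by rw [← ha]; ring
    rw [e] at hcmp
    exact hcmp
  have h2 : HasDerivAt (fun x : ℝ => (x - μ * t) / c) (1 / c) 0 :=
    (((hasDerivAt_id 0).sub_const (μ * t))).div_const c
  have hQ2 : HasDerivAt (fun x : ℝ => Q ((x - μ * t) / c)) (-gauss (-a) * (1 / c)) 0 := by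
    have := (hasDerivAt_Q ((0 - μ * t) / c)).comp 0 h2
    have e : (0 - μ * t) / c = -a := by rw [← ha]; ring
    rw [e] at this
    exact this
  have hexp : HasDerivAt (fun x : ℝ => Real.exp (-(2 * μ * x / σ ^ 2))) (-(2 * μ / σ ^ 2)) 0 := by
    have hin : HasDerivAt (fun x : ℝ => -(2 * μ * x / σ ^ 2)) (-(2 * μ / σ ^ 2)) 0 := by
      have : HasDerivAt (fun x : ℝ => -(2 * μ * x / σ ^ 2)) (-(2 * μ * 1 / σ ^ 2)) 0 := by
        exact (((hasDerivAt_id 0).const_mul (2 * μ)).div_const (σ ^ 2)).neg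
      simpa using this
    have := (Real.hasDerivAt_exp (-(2 * μ * 0 / σ ^ 2))).comp 0 hin
    simpa [Function.comp_def] using this
  have hprod := hexp.mul hQ2
  have hF := ((hasDerivAt_const (0:ℝ) (1:ℝ)).sub hQ1).add hprod
  have hFD : ((0:ℝ) - -gauss (-a) * (-1 / c) + (-(2 * μ / σ ^ 2) * Q ((0 - μ * t) / c)
        + Real.exp (-(2 * μ * 0 / σ ^ 2)) * (-gauss (-a) * (1 / c))))
      = -2 * gauss a / c - 2 * μ / σ ^ 2 * Q (-a) := by
    have e : (0 - μ * t) / c = -a := by rw [← ha]; ring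
    rw [e, gauss_neg]
    simp [Real.exp_zero]
    ring
  rw [hFD] at hF
  refine hF.congr_of_eventuallyEq (Eventually.of_forall fun x => ?_)
  exact pf_eq μ hσ ht x


end Stmt4Aux

open Stmt4Aux

/-- `lim_{t→0⁺} √(2πσ²t)·∂p/∂x(0,t) = −2`. -/
theorem stmt4 (hμ : 0 < μ) (hσ : 0 < σ) :
    Filter.Tendsto
      (fun t => Real.sqrt (2 * Real.pi * σ ^ 2 * t) * deriv (fun x => pf μ σ x t) 0)
      (nhdsWithin 0 (Set.Ioi 0)) (nhds (-2)) := by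
  set φ : ℝ → ℝ := fun t =>
    -2 * Real.exp (-(μ * Real.sqrt t / σ) ^ 2 / 2)
      - 2 * μ * Real.sqrt (2 * π) / σ * Real.sqrt t * Q (-(μ * Real.sqrt t / σ)) with hφdef
  have h2π : (0:ℝ) < Real.sqrt (2 * π) := Real.sqrt_pos.mpr (by positivity)
  have key : ∀ t ∈ Ioi (0:ℝ),
      Real.sqrt (2 * Real.pi * σ ^ 2 * t) * deriv (fun x => pf μ σ x t) 0 = φ t := by
    intro t ht
    rw [mem_Ioi] at ht
    have hst : (0:ℝ) < Real.sqrt t := Real.sqrt_pos.mpr ht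
    rw [(hasDerivAt_pf μ hσ ht).deriv]
    have hsqrt1 : Real.sqrt (2 * π * σ ^ 2 * t) = Real.sqrt (2 * π) * (σ * Real.sqrt t) := by
      rw [show 2 * π * σ ^ 2 * t = (2 * π) * (σ ^ 2 * t) by ring,
        Real.sqrt_mul (by positivity : (0:ℝ) ≤ 2 * π) (σ ^ 2 * t),
        Real.sqrt_mul (by positivity : (0:ℝ) ≤ σ ^ 2) t, Real.sqrt_sq hσ.le]
    rw [hsqrt1, hφdef]
    unfold gauss
    field_simp
  have c1 : Continuous (fun t : ℝ => -2 * Real.exp (-(μ * Real.sqrt t / σ) ^ 2 / 2)) := by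
    fun_prop
  have c2 : Continuous (fun t : ℝ =>
      2 * μ * Real.sqrt (2 * π) / σ * Real.sqrt t * Q (-(μ * Real.sqrt t / σ))) :=
    (continuous_const.mul Real.continuous_sqrt).mul (Q_continuous.comp (by fun_prop))
  have hφcont : Continuous φ := c1.sub c2
  have hφ0 : φ 0 = -2 := by
    simp [hφdef, Real.sqrt_zero]
  have htend : Tendsto φ (nhdsWithin 0 (Ioi 0)) (nhds (-2)) := by
    rw [← hφ0]
    exact (hφcont.tendsto 0).mono_left nhdsWithin_le_nhds
  refine htend.congr' ?_
  exact eventuallyEq_of_mem self_mem_nhdsWithin fun t ht => (key t ht).symm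

end
end
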